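/- If L is the generator of a one-parameter semigroup of contractions on a finite-dimensional normed space, then the kernel of L and the range of L intersect trivially: Ker L ∩ Range L = {0}. -/

import Mathlib

/-!
If `L x = 0` and `x = L y`, then `L² y = 0`, so the exponential series applied to `y` stops after
two terms: `exp (t L) y = y + t x`. A contraction semigroup keeps this orbit within the ball of
radius `‖y‖`, which forces the linearly growing part `t x` to vanish.
-/

open NormedSpace

theorem exp_apply_of_apply_apply_eq_zero {𝕂 E : Type*} [RCLike 𝕂] [NormedAddCommGroup E]
    [NormedSpace 𝕂 E] [CompleteSpace E] {A : E →L[𝕂] E} {y : E} (h : A (A y) = 0) :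
    exp A y = y + A y := by
  have hsum := (exp_series_hasSum_exp' (𝕂 := 𝕂) A).mapL (ContinuousLinearMap.apply 𝕂 E y)
  have hfinite : HasSum (fun n : ℕ => ((n.factorial⁻¹ : 𝕂) • A ^ n) y)
      (∑ n ∈ Finset.range 2, ((n.factorial⁻¹ : 𝕂) • A ^ n) y) := by
    refine hasSum_sum_of_ne_finset_zero fun n hn => ?_
    obtain ⟨m, rfl⟩ : ∃ m, n = m + 2 :=
      ⟨n - 2, by rw [Finset.mem_range, not_lt] at hn; omega⟩
    simp [pow_add, sq, h]
  exact (hsum.unique hfinite).trans (by simp [Finset.sum_range_succ])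

theorem eq_zero_of_forall_norm_add_smul_le {F : Type*} [NormedAddCommGroup F] [NormedSpace ℝ F]
    {x y : F} (h : ∀ t : ℝ, 0 ≤ t → ‖y + t • x‖ ≤ ‖y‖) : x = 0 := by
  have bound : ∀ t : ℝ, 0 ≤ t → t * ‖x‖ ≤ 2 * ‖y‖ := fun t ht =>
    calc t * ‖x‖ = ‖(y + t • x) - y‖ := by
          rw [add_sub_cancel_left, norm_smul, Real.norm_of_nonneg ht]
      _ ≤ ‖y + t • x‖ + ‖y‖ := norm_sub_le _ _
      _ ≤ 2 * ‖y‖ := by linarith [h t ht]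
  by_contra hx
  have hxpos : 0 < ‖x‖ := norm_pos_iff.mpr hx
  have := bound ((2 * ‖y‖ + 1) / ‖x‖) (by positivity)
  rw [div_mul_cancel₀ _ hxpos.ne'] at this
  linarith

/-- If `L` generates a one-parameter semigroup of contractions on a
finite-dimensional normed space, then `ker L ∩ range L = {0}`. -/
theorem stmt0 {E : Type*} [NormedAddCommGroup E] [NormedSpace ℂ E]
    [FiniteDimensional ℂ E] (L : E →L[ℂ] E)
    (hcontr : ∀ t : ℝ, 0 ≤ t → ‖NormedSpace.exp ((t : ℂ) • L)‖ ≤ 1) :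
    LinearMap.ker (L : E →ₗ[ℂ] E) ⊓ LinearMap.range (L : E →ₗ[ℂ] E) = ⊥ := by
  rw [Submodule.eq_bot_iff]
  rintro _ ⟨hker, y, rfl⟩
  replace hker : L (L y) = 0 := hker
  refine eq_zero_of_forall_norm_add_smul_le (y := y) fun t ht => ?_
  have horbit : exp ((t : ℂ) • L) y = y + t • L y := by
    rw [exp_apply_of_apply_apply_eq_zero (by simp [hker])]
    simp [Complex.coe_smul]
  calc ‖y + t • L y‖ = ‖exp ((t : ℂ) • L) y‖ := by rw [horbit]
    _ ≤ ‖exp ((t : ℂ) • L)‖ * ‖y‖ := (exp ((t : ℂ) • L)).le_opNorm y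
    _ ≤ ‖y‖ := mul_le_of_le_one_left (norm_nonneg y) (hcontr t ht)
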